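/- Let X be a uniformly locally finite CAT(0) cube complex with no extremal vertices and such that no hyperplane of X has extremal vertices. Then the natural homomorphism ι : Aut(X) → Aut(C(X)) is a group isomorphism, with inverse the map ρ induced by the action of Aut(C(X)) on maximal cliques. -/

import Mathlib

open SimpleGraph

variable {V : Type*}

/-- A median graph: combinatorial model of (the 1-skeleton of) a CAT(0) cube complex. -/
def IsMedianGraph (G : SimpleGraph V) : Prop :=
  G.Connected ∧ ∀ x y z : V, ∃! m : V,
    G.dist x m + G.dist m y = G.dist x y ∧
    G.dist x m + G.dist m z = G.dist x z ∧
    G.dist y m + G.dist m z = G.dist y z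

/-- Djoković–Winkler relation on oriented edges of a median graph; hyperplanes are its classes. -/
def Theta (G : SimpleGraph V) (e f : V × V) : Prop :=
  G.dist e.1 f.1 + G.dist e.2 f.2 ≠ G.dist e.1 f.2 + G.dist e.2 f.1

/-- A hyperplane, identified with the set of (oriented) edges crossing it. -/
def IsHyperplane (G : SimpleGraph V) (h : Set (V × V)) : Prop :=
  ∃ e : V × V, G.Adj e.1 e.2 ∧ h = {f | G.Adj f.1 f.2 ∧ Theta G e f}

/-- The hyperplane `h` is adjacent to the vertex `v` (i.e. `v` lies in the carrier of `h`). -/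
def AdjTo (G : SimpleGraph V) (h : Set (V × V)) (v : V) : Prop :=
  ∃ e ∈ h, e.1 = v ∨ e.2 = v

/-- `Wv G v`: the set of hyperplanes adjacent to `v`. -/
def Wv (G : SimpleGraph V) (v : V) : Set (Set (V × V)) :=
  {h | IsHyperplane G h ∧ AdjTo G h v}

/-- Two hyperplanes are in contact if their carriers share a vertex. -/
def Contact (G : SimpleGraph V) (h h' : Set (V × V)) : Prop :=
  ∃ v : V, AdjTo G h v ∧ AdjTo G h' v

/-- Two hyperplanes are transverse if they cross a common square. -/
def Transverse (G : SimpleGraph V) (h h' : Set (V × V)) : Prop :=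
  ∃ a b c d : V, (a, b) ∈ h ∧ (c, d) ∈ h ∧ (a, c) ∈ h' ∧ (b, d) ∈ h' ∧
    G.Adj a b ∧ G.Adj c d ∧ G.Adj a c ∧ G.Adj b d

/-- A clique in the contact graph: a set of hyperplanes whose carriers pairwise intersect. -/
def IsContactClique (G : SimpleGraph V) (C : Set (Set (V × V))) : Prop :=
  (∀ h ∈ C, IsHyperplane G h) ∧ ∀ h ∈ C, ∀ h' ∈ C, h ≠ h' → Contact G h h'

/-- A maximal clique in the contact graph. -/
def IsMaxContactClique (G : SimpleGraph V) (C : Set (Set (V × V))) : Prop :=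
  IsContactClique G C ∧ ∀ C', IsContactClique G C' → C ⊆ C' → C' = C

/-- The link of `v` is a cone, i.e. `v` is an extremal vertex. -/
def LinkIsCone (G : SimpleGraph V) (v : V) : Prop :=
  ∃ h ∈ Wv G v, ∀ h' ∈ Wv G v, h' ≠ h → Transverse G h h'

/-- Uniform local finiteness. -/
def UnifLocFinite (G : SimpleGraph V) : Prop :=
  ∃ N : ℕ, ∀ v : V, (G.neighborSet v).Finite ∧ (G.neighborSet v).ncard ≤ N

abbrev Hyp (G : SimpleGraph V) := {h : Set (V × V) // IsHyperplane G h}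

/-- The contact graph `𝒞(X)`. -/
def contactGraph (G : SimpleGraph V) : SimpleGraph (Hyp G) where
  Adj h h' := h ≠ h' ∧ Contact G h.1 h'.1
  symm := ⟨by
    rintro h h' ⟨hne, v, hv, hv'⟩
    exact ⟨hne.symm, v, hv', hv⟩⟩
  loopless := ⟨by rintro h ⟨hne, -⟩; exact hne rfl⟩

/-- `Ical G w` = I(w): the hyperplanes whose carrier contains the carrier of `w`,
i.e. the intersection of the sets `Wv G v` over all vertices `v` adjacent to `w`. -/
def Ical (G : SimpleGraph V) (w : Set (V × V)) : Set (Set (V × V)) :=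
  {u | IsHyperplane G u ∧ ∀ v : V, AdjTo G w v → AdjTo G u v}

/-- `Ical0 G w` = I⁰(w): the hyperplanes with the same carrier as `w`. -/
def Ical0 (G : SimpleGraph V) (w : Set (V × V)) : Set (Set (V × V)) :=
  {u | u ∈ Ical G w ∧ w ∈ Ical G u}

/-- The action of a cubical automorphism on sets of edges (e.g. hyperplanes). -/
def hmap (G : SimpleGraph V) (φ : G ≃g G) (h : Set (V × V)) : Set (V × V) :=
  (fun e : V × V => (φ e.1, φ e.2)) '' h

/-- `π` is the vertex permutation induced by the contact-graph automorphism `ψ` via the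
correspondence between vertices and maximal cliques (`ρ(ψ) = π`). -/
def InducesPerm (G : SimpleGraph V) (ψ : contactGraph G ≃g contactGraph G)
    (π : Equiv.Perm V) : Prop :=
  ∀ (v : V) (h : Hyp G), h.1 ∈ Wv G v ↔ (ψ h).1 ∈ Wv G (π v)

/-- The hyperplane `u` is adjacent, inside the cube complex structure of a hyperplane `w`,
to the vertex of `w` given by the edge `e ∈ w`: `u` crosses a square containing `e`. -/
def HypAdjEdge (G : SimpleGraph V) (u : Set (V × V)) (e : V × V) : Prop :=
  ∃ c d : V, (e.1, c) ∈ u ∧ (e.2, d) ∈ u ∧ G.Adj c d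

/-- The link, in the cube complex structure of hyperplane `w`, of the vertex given by
`e ∈ w` is a cone (i.e. this vertex of `w` is extremal). -/
def HypLinkCone (G : SimpleGraph V) (w : Set (V × V)) (e : V × V) : Prop :=
  ∃ u, IsHyperplane G u ∧ u ≠ w ∧ HypAdjEdge G u e ∧
    ∀ u', IsHyperplane G u' → u' ≠ w → HypAdjEdge G u' e → u' ≠ u → Transverse G u u'

/-- No hyperplane of `X` has an extremal vertex. -/
def NoHypExtremalVertex (G : SimpleGraph V) : Prop :=
  ∀ w, IsHyperplane G w → ∀ e ∈ w, ¬ HypLinkCone G w e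

/-!
A vertex `x` of the median graph `G` is recorded in the contact graph by its star `Wv G x`,
a clique. Carriers of hyperplanes are convex, so by the Helly property of median graphs and
uniform local finiteness every clique of the contact graph lies in a star; hence a contact-graph
automorphism maps stars onto stars. Without extremal vertices a vertex is determined by its
star, which gives the permutation `ρ(ψ)` and the injectivity of `ι`. Without extremal vertices
of hyperplanes, `v` and `w` are adjacent exactly when `v` and `w` are the only vertices whose
stars contain `Wv G v ∩ Wv G w`, and a hyperplane is determined by its carrier; so `ρ(ψ)` is a
graph automorphism `φ` and `ι(φ) = ψ`.
-/

namespace SimpleGraph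

variable {G : SimpleGraph V}

theorem Connected.exists_adj_dist_add_one (hc : G.Connected) {u v : V} (huv : u ≠ v) :
    ∃ w, G.Adj u w ∧ G.dist w v + 1 = G.dist u v := by
  obtain ⟨p, hp⟩ := hc.exists_walk_length_eq_dist u v
  cases p with
  | nil => exact absurd rfl huv
  | @cons _ w _ hadj p =>
    refine ⟨w, hadj, le_antisymm ?_ ?_⟩
    · rw [← hp, Walk.length_cons]
      exact Nat.add_le_add_right (dist_le p) 1
    · calc G.dist u v ≤ G.dist u w + G.dist w v := hc.dist_triangle
        _ = G.dist w v + 1 := by rw [dist_eq_one_iff_adj.mpr hadj, add_comm]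

theorem Connected.dist_iso_apply (hc : G.Connected) (φ : G ≃g G) (u v : V) :
    G.dist (φ u) (φ v) = G.dist u v := by
  have hle : ∀ (χ : G ≃g G) (a b : V), G.dist (χ a) (χ b) ≤ G.dist a b := fun χ a b => by
    obtain ⟨p, hp⟩ := hc.exists_walk_length_eq_dist a b
    calc G.dist (χ a) (χ b) ≤ (p.map χ.toHom).length := dist_le _
      _ = G.dist a b := by rw [Walk.length_map, hp]
  refine le_antisymm (hle φ u v) ?_
  simpa using hle φ.symm (φ u) (φ v)

def IsGeodesicallyConvex (G : SimpleGraph V) (S : Set V) : Prop :=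
  ∀ ⦃p r x : V⦄, p ∈ S → r ∈ S → G.dist p x + G.dist x r = G.dist p r → x ∈ S

theorem IsGeodesicallyConvex.inter {S T : Set V} (hS : G.IsGeodesicallyConvex S)
    (hT : G.IsGeodesicallyConvex T) : G.IsGeodesicallyConvex (S ∩ T) :=
  fun _ _ _ hp hr hx => ⟨hS hp.1 hr.1 hx, hT hp.2 hr.2 hx⟩

theorem Connected.isGeodesicallyConvex_of_step (hc : G.Connected) {S : Set V}
    (hstep : ∀ ⦃p r q : V⦄, p ∈ S → r ∈ S → G.Adj p q →
      G.dist q r + 1 = G.dist p r → q ∈ S) :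
    G.IsGeodesicallyConvex S := by
  intro p r x hp hr hx
  induction hn : G.dist p x generalizing p with
  | zero => rwa [← hc.dist_eq_zero_iff.mp hn]
  | succ n ih =>
    have hpx : p ≠ x := by rintro rfl; simp at hn
    obtain ⟨q, hpq, hq⟩ := hc.exists_adj_dist_add_one hpx
    have hqr : G.dist q r ≤ G.dist q x + G.dist x r := hc.dist_triangle
    have hpr : G.dist p r ≤ G.dist p q + G.dist q r := hc.dist_triangle
    rw [dist_eq_one_iff_adj.mpr hpq] at hpr
    exact ih (hstep hp hr hpq (by omega)) (by omega) (by omega)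

theorem IsClique.image_iso {W : Type*} {G' : SimpleGraph W} {s : Set V} (hs : G.IsClique s)
    (ψ : G ≃g G') : G'.IsClique (ψ '' s) := by
  rintro _ ⟨a, ha, rfl⟩ _ ⟨b, hb, rfl⟩ hne
  exact ψ.map_adj_iff.mpr (hs ha hb fun hab => hne (hab ▸ rfl))

end SimpleGraph

def halfspace (G : SimpleGraph V) (e : V × V) : Set V :=
  {x | G.dist x e.1 < G.dist x e.2}

def Separates (G : SimpleGraph V) (e : V × V) (x y : V) : Prop :=
  ¬ (x ∈ halfspace G e ↔ y ∈ halfspace G e)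

def dualHyperplane (G : SimpleGraph V) (e : V × V) : Set (V × V) :=
  {f | G.Adj f.1 f.2 ∧ Theta G e f}

def hypsAt (G : SimpleGraph V) (v : V) : Set (Hyp G) :=
  Subtype.val ⁻¹' Wv G v

section

variable {G : SimpleGraph V} {h k : Set (V × V)}

theorem isHyperplane_dualHyperplane {e : V × V} (he : G.Adj e.1 e.2) :
    IsHyperplane G (dualHyperplane G e) :=
  ⟨e, he, rfl⟩

theorem mem_dualHyperplane_self {e : V × V} (he : G.Adj e.1 e.2) : e ∈ dualHyperplane G e := by
  refine ⟨he, ?_⟩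
  rw [Theta, dist_self, dist_self, dist_eq_one_iff_adj.mpr he, dist_eq_one_iff_adj.mpr he.symm]
  decide

theorem IsHyperplane.nonempty (hh : IsHyperplane G h) : h.Nonempty := by
  obtain ⟨e, he, rfl⟩ := hh
  exact ⟨e, mem_dualHyperplane_self he⟩

theorem IsHyperplane.adj_of_mem (hh : IsHyperplane G h) {f : V × V} (hf : f ∈ h) :
    G.Adj f.1 f.2 := by
  obtain ⟨e, -, rfl⟩ := hh
  exact hf.1

theorem fst_mem_halfspace {a b : V} (hab : G.Adj a b) : a ∈ halfspace G (a, b) := by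
  simp [halfspace, dist_eq_one_iff_adj.mpr hab]

theorem separates_self {a b : V} (hab : G.Adj a b) : Separates G (a, b) a b := by
  have hb : b ∉ halfspace G (a, b) := by simp [halfspace]
  simp [Separates, fst_mem_halfspace hab, hb]

theorem Transverse.symm (hhk : Transverse G h k) : Transverse G k h := by
  obtain ⟨a, b, c, d, hab, hcd, hac, hbd, hab', hcd', hac', hbd'⟩ := hhk
  exact ⟨a, c, b, d, hac, hbd, hab, hcd, hac', hbd', hab', hcd'⟩

theorem mem_hmap_iff (φ : G ≃g G) (h : Set (V × V)) (g : V × V) :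
    g ∈ hmap G φ h ↔ (φ.symm g.1, φ.symm g.2) ∈ h := by
  constructor
  · rintro ⟨f, hf, rfl⟩
    simpa using hf
  · intro hg
    exact ⟨_, hg, by simp⟩

theorem hmap_hmap_symm (φ : G ≃g G) (h : Set (V × V)) : hmap G φ (hmap G φ.symm h) = h :=
  Set.ext fun g => by simp [mem_hmap_iff]

theorem adjTo_hmap_iff (φ : G ≃g G) (h : Set (V × V)) (v : V) :
    AdjTo G (hmap G φ h) (φ v) ↔ AdjTo G h v := by
  constructor
  · rintro ⟨_, ⟨f, hf, rfl⟩, hv | hv⟩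
    · exact ⟨f, hf, .inl (φ.injective hv)⟩
    · exact ⟨f, hf, .inr (φ.injective hv)⟩
  · rintro ⟨f, hf, hv | hv⟩
    · exact ⟨_, ⟨f, hf, rfl⟩, .inl (congrArg φ hv)⟩
    · exact ⟨_, ⟨f, hf, rfl⟩, .inr (congrArg φ hv)⟩

theorem SimpleGraph.Connected.isHyperplane_hmap (hc : G.Connected) (φ : G ≃g G)
    (hh : IsHyperplane G h) : IsHyperplane G (hmap G φ h) := by
  obtain ⟨e, he, rfl⟩ := hh
  refine ⟨(φ e.1, φ e.2), φ.map_adj_iff.mpr he, Set.ext fun g => ?_⟩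
  have hdist : ∀ u w, G.dist (φ u) w = G.dist u (φ.symm w) := fun u w => by
    rw [← hc.dist_iso_apply φ u, RelIso.apply_symm_apply]
  rw [mem_hmap_iff]
  simp only [Set.mem_ofPred_eq, φ.symm.map_adj_iff, Theta, hdist]

theorem SimpleGraph.Connected.wv_apply (hc : G.Connected) (φ : G ≃g G) (v : V) :
    Wv G (φ v) = hmap G φ '' Wv G v := by
  refine Set.Subset.antisymm (fun k hk => ⟨hmap G φ.symm k,
    ⟨hc.isHyperplane_hmap φ.symm hk.1, ?_⟩, hmap_hmap_symm φ k⟩) ?_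
  · simpa using (adjTo_hmap_iff φ.symm k (φ v)).mpr hk.2
  · rintro _ ⟨h, hh, rfl⟩
    exact ⟨hc.isHyperplane_hmap φ hh.1, (adjTo_hmap_iff φ h v).mpr hh.2⟩

theorem isClique_hypsAt (v : V) : (contactGraph G).IsClique (hypsAt G v) :=
  fun _ hh _ hh' hne => ⟨hne, v, hh.2, hh'.2⟩

theorem hypsAt_inter_subset_iff {v w x : V} :
    hypsAt G v ∩ hypsAt G w ⊆ hypsAt G x ↔ Wv G v ∩ Wv G w ⊆ Wv G x :=
  ⟨fun H k hk => H (a := ⟨k, hk.1.1⟩) hk, fun H _ hh => H hh⟩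

theorem InducesPerm.hypsAt_apply {ψ : contactGraph G ≃g contactGraph G} {π : Equiv.Perm V}
    (hind : InducesPerm G ψ π) (v : V) : hypsAt G (π v) = ψ '' hypsAt G v := by
  ext h
  rw [← ψ.apply_symm_apply h, ψ.injective.mem_set_image]
  exact (hind v (ψ.symm h)).symm

end

namespace IsMedianGraph

variable {G : SimpleGraph V} {h k : Set (V × V)}

/-! ### Distances -/

theorem dist_eq_or_of_adj (hG : IsMedianGraph G) {u v : V} (huv : G.Adj u v) (x : V) :
    G.dist v x = G.dist u x + 1 ∨ G.dist u x = G.dist v x + 1 := by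
  obtain ⟨m, ⟨hum, hvm, hx⟩, -⟩ := hG.2 u v x
  rw [dist_eq_one_iff_adj.mpr huv] at hum
  have := dist_eq_one_iff_adj.mpr huv.symm
  rcases Nat.eq_zero_or_pos (G.dist u m) with h0 | h0
  · obtain rfl := hG.1.dist_eq_zero_iff.mp h0
    left; omega
  · obtain rfl := hG.1.dist_eq_zero_iff.mp (by omega : G.dist m v = 0)
    right; omega

theorem dist_eq_or_of_adj' (hG : IsMedianGraph G) {u v : V} (huv : G.Adj u v) (x : V) :
    G.dist x v = G.dist x u + 1 ∨ G.dist x u = G.dist x v + 1 := by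
  simpa only [dist_comm (v := x)] using hG.dist_eq_or_of_adj huv x

theorem dist_ne_of_adj (hG : IsMedianGraph G) {u v : V} (huv : G.Adj u v) (x : V) :
    G.dist u x ≠ G.dist v x := by
  rcases hG.dist_eq_or_of_adj huv x with h' | h' <;> omega

theorem dist_eq_two_of_adj_of_adj (hG : IsMedianGraph G) {v a b : V} (ha : G.Adj v a)
    (hb : G.Adj v b) (hab : a ≠ b) : G.dist a b = 2 := by
  have hna : ¬ G.Adj a b := fun h => hG.dist_ne_of_adj h v <| by
    rw [dist_comm, dist_comm (u := b), dist_eq_one_iff_adj.mpr ha, dist_eq_one_iff_adj.mpr hb]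
  have htri : G.dist a b ≤ G.dist a v + G.dist v b := hG.1.dist_triangle
  rw [dist_eq_one_iff_adj.mpr ha.symm, dist_eq_one_iff_adj.mpr hb] at htri
  have h0 : G.dist a b ≠ 0 := fun h => hab (hG.1.dist_eq_zero_iff.mp h)
  have h1 : G.dist a b ≠ 1 := fun h => hna (dist_eq_one_iff_adj.mp h)
  omega

/-- The quadrangle condition. -/
theorem exists_adj_adj_of_dist (hG : IsMedianGraph G) {v a b x : V} (ha : G.Adj v a)
    (hb : G.Adj v b) (hab : a ≠ b) (hax : G.dist a x + 1 = G.dist v x)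
    (hbx : G.dist b x + 1 = G.dist v x) :
    ∃ w, G.Adj a w ∧ G.Adj b w ∧ G.dist w x + 2 = G.dist v x := by
  obtain ⟨m, ⟨ham, hamx, hbmx⟩, -⟩ := hG.2 a b x
  rw [hG.dist_eq_two_of_adj_of_adj ha hb hab] at ham
  have := dist_comm (G := G) (u := m) (v := b)
  have := dist_comm (G := G) (u := m) (v := x)
  have hma : G.dist a m = 1 := by omega
  exact ⟨m, dist_eq_one_iff_adj.mp hma, dist_eq_one_iff_adj.mp (by omega), by omega⟩

/-- Median graphs contain no `K_{2,3}`. -/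
theorem eq_of_three_common_adj (hG : IsMedianGraph G) {a c b d m : V}
    (hab : G.Adj a b) (hcb : G.Adj c b) (had : G.Adj a d) (hcd : G.Adj c d)
    (ham : G.Adj a m) (hcm : G.Adj c m) (hbd : b ≠ d) (hbm : b ≠ m) (hdm : d ≠ m) :
    a = c := by
  have hmedian : ∀ {y}, G.Adj y b → G.Adj y d → G.Adj y m →
      G.dist b y + G.dist y d = G.dist b d ∧ G.dist b y + G.dist y m = G.dist b m ∧
        G.dist d y + G.dist y m = G.dist d m := fun {y} hb hd hm => by
    simp only [hG.dist_eq_two_of_adj_of_adj hb hd hbd, hG.dist_eq_two_of_adj_of_adj hb hm hbm,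
      hG.dist_eq_two_of_adj_of_adj hd hm hdm, dist_comm (v := y), dist_eq_one_iff_adj.mpr hb,
      dist_eq_one_iff_adj.mpr hd, dist_eq_one_iff_adj.mpr hm, and_self]
  exact (hG.2 b d m).unique (hmedian hab had ham) (hmedian hcb hcd hcm)

/-! ### Halfspaces and hyperplanes -/

theorem halfspace_swap (hG : IsMedianGraph G) {a b : V} (hab : G.Adj a b) :
    halfspace G (b, a) = (halfspace G (a, b))ᶜ := by
  ext x
  have := hG.dist_eq_or_of_adj' hab x
  simp only [halfspace, Set.mem_ofPred_eq, Set.mem_compl_iff]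
  omega

theorem mem_halfspace_of_square (hG : IsMedianGraph G) {a b c d x : V} (hab : G.Adj a b)
    (hbc : G.Adj b c) (hcd : G.Adj c d) (hda : G.Adj d a) (hac : a ≠ c) (hbd : b ≠ d)
    (hx : x ∈ halfspace G (a, b)) : x ∈ halfspace G (d, c) := by
  by_contra hx'
  simp only [halfspace, Set.mem_ofPred_eq] at hx hx'
  rw [dist_comm (u := x), dist_comm (u := x)] at hx hx'
  have := hG.dist_eq_or_of_adj hab x
  have := hG.dist_eq_or_of_adj hbc x
  have := hG.dist_eq_or_of_adj hcd x
  have := hG.dist_eq_or_of_adj hda x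
  obtain ⟨w, haw, hcw, hw⟩ :=
    hG.exists_adj_adj_of_dist (x := x) hab.symm hbc hac (by omega) (by omega)
  have hbw : b ≠ w := by rintro rfl; omega
  have hdw : d ≠ w := by rintro rfl; omega
  exact hac (hG.eq_of_three_common_adj hab hbc.symm hda.symm hcd haw hcw hbd hbw hdw)

theorem halfspace_eq_of_square (hG : IsMedianGraph G) {a b c d : V} (hab : G.Adj a b)
    (hbc : G.Adj b c) (hcd : G.Adj c d) (hda : G.Adj d a) (hac : a ≠ c) (hbd : b ≠ d) :
    halfspace G (a, b) = halfspace G (d, c) :=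
  Set.ext fun _ => ⟨hG.mem_halfspace_of_square hab hbc hcd hda hac hbd,
    hG.mem_halfspace_of_square hcd.symm hbc.symm hab.symm hda.symm hbd.symm hac.symm⟩

/-- Djoković's lemma, proved by transporting `f` towards `e` one square at a time. -/
theorem halfspace_eq_of_mem_of_notMem (hG : IsMedianGraph G) {e f : V × V}
    (he : G.Adj e.1 e.2) (hf : G.Adj f.1 f.2) (h₁ : f.1 ∈ halfspace G e)
    (h₂ : f.2 ∉ halfspace G e) : halfspace G f = halfspace G e := by
  obtain ⟨a, b⟩ := e
  obtain ⟨c, d⟩ := f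
  simp only [halfspace, Set.mem_ofPred_eq] at he hf h₁ h₂ ⊢
  induction hn : G.dist c a generalizing c d with
  | zero =>
    obtain rfl := hG.1.dist_eq_zero_iff.mp hn
    have := hG.dist_eq_or_of_adj' he d
    have := dist_eq_one_iff_adj.mpr hf.symm
    obtain rfl := hG.1.dist_eq_zero_iff.mp (by omega : G.dist d b = 0)
    rfl
  | succ n ih =>
    have := hG.dist_eq_or_of_adj' he c
    have := hG.dist_eq_or_of_adj' he d
    have := hG.dist_eq_or_of_adj hf a
    have := hG.dist_eq_or_of_adj hf b
    obtain ⟨u, hcu, hu⟩ := hG.1.exists_adj_dist_add_one (fun hca : c = a => by simp_all)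
    have := hG.dist_eq_or_of_adj hcu b
    have := hG.dist_eq_or_of_adj' he u
    obtain ⟨w, huw, hdw, hw⟩ :=
      hG.exists_adj_adj_of_dist (x := b) hcu hf (by rintro rfl; omega) (by omega) (by omega)
    have := hG.dist_eq_or_of_adj huw a
    have := hG.dist_eq_or_of_adj hdw a
    have := hG.dist_eq_or_of_adj' he w
    rw [← ih u w huw (by omega) (by omega) (by omega)]
    exact hG.halfspace_eq_of_square hf hdw huw.symm hcu.symm (by rintro rfl; omega)
      (by rintro rfl; omega)

theorem theta_iff_separates (hG : IsMedianGraph G) {e f : V × V} (he : G.Adj e.1 e.2) :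
    Theta G e f ↔ Separates G e f.1 f.2 := by
  have := hG.dist_eq_or_of_adj' he f.1
  have := hG.dist_eq_or_of_adj' he f.2
  simp only [Theta, Separates, halfspace, Set.mem_ofPred_eq, dist_comm (u := e.1),
    dist_comm (u := e.2)]
  omega

theorem separates_iff_of_separates (hG : IsMedianGraph G) {e f : V × V} (he : G.Adj e.1 e.2)
    (hf : G.Adj f.1 f.2) (hef : Separates G e f.1 f.2) (x y : V) :
    Separates G f x y ↔ Separates G e x y := by
  unfold Separates at hef
  by_cases h₁ : f.1 ∈ halfspace G e
  · rw [Separates, Separates, hG.halfspace_eq_of_mem_of_notMem he hf h₁ (by tauto)]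
  · have hswap : halfspace G (f.2, f.1) = halfspace G e :=
      hG.halfspace_eq_of_mem_of_notMem he hf.symm (by tauto) h₁
    have hcompl : halfspace G f = (halfspace G e)ᶜ := by
      show halfspace G (f.1, f.2) = _
      rw [hG.halfspace_swap hf.symm, hswap]
    simp only [Separates, hcompl, Set.mem_compl_iff]
    tauto

theorem mem_hyperplane_iff (hG : IsMedianGraph G) (hh : IsHyperplane G h)
    {f : V × V} (hf : f ∈ h) (g : V × V) :
    g ∈ h ↔ G.Adj g.1 g.2 ∧ Separates G f g.1 g.2 := by
  obtain ⟨e, he, rfl⟩ := hh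
  have hef := (hG.theta_iff_separates he).mp hf.2
  refine and_congr_right fun _ => ?_
  rw [hG.theta_iff_separates he, hG.separates_iff_of_separates he hf.1 hef]

theorem hyperplane_eq_of_mem (hG : IsMedianGraph G) (hh : IsHyperplane G h)
    (hk : IsHyperplane G k) {f : V × V} (hfh : f ∈ h) (hfk : f ∈ k) : h = k :=
  Set.ext fun g => by rw [hG.mem_hyperplane_iff hh hfh, hG.mem_hyperplane_iff hk hfk]

theorem mem_of_halfspace_eq (hG : IsMedianGraph G) (hh : IsHyperplane G h) {f g : V × V}
    (hf : f ∈ h) (hg : G.Adj g.1 g.2) (hfg : halfspace G g = halfspace G f) : g ∈ h := by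
  refine (hG.mem_hyperplane_iff hh hf g).mpr ⟨hg, ?_⟩
  have := separates_self hg
  unfold Separates at this ⊢
  rwa [← hfg]

theorem swap_mem_hyperplane (hG : IsMedianGraph G) (hh : IsHyperplane G h) {a b : V}
    (hab : (a, b) ∈ h) : (b, a) ∈ h := by
  have hadj := hh.adj_of_mem hab
  refine (hG.mem_hyperplane_iff hh hab _).mpr ⟨hadj.symm, ?_⟩
  have := separates_self hadj
  unfold Separates at this ⊢
  tauto

theorem adjTo_iff_exists_mem (hG : IsMedianGraph G) (hh : IsHyperplane G h) {v : V} :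
    AdjTo G h v ↔ ∃ a, (v, a) ∈ h := by
  constructor
  · rintro ⟨⟨a, b⟩, hab, rfl | rfl⟩
    · exact ⟨b, hab⟩
    · exact ⟨a, hG.swap_mem_hyperplane hh hab⟩
  · rintro ⟨a, ha⟩
    exact ⟨_, ha, .inl rfl⟩

/-! ### Carriers -/

theorem adjTo_of_dist_add_one (hG : IsMedianGraph G) (hk : IsHyperplane G k) {p a q x : V}
    (hpa : (p, a) ∈ k) (hpq : G.Adj p q) (haq : a ≠ q) (hax : G.dist a x + 1 = G.dist p x)
    (hqx : G.dist q x + 1 = G.dist p x) : AdjTo G k q := by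
  have hpa' : G.Adj p a := hk.adj_of_mem hpa
  obtain ⟨w, haw, hqw, hw⟩ := hG.exists_adj_adj_of_dist hpa' hpq haq hax hqx
  have hsq := hG.halfspace_eq_of_square hpa' haw hqw.symm hpq.symm (by rintro rfl; omega) haq
  exact ⟨(q, w), hG.mem_of_halfspace_eq hk hpa hqw hsq.symm, .inl rfl⟩

theorem adj_of_mem_of_mem (hG : IsMedianGraph G) (hk : IsHyperplane G k) {p q a b : V}
    (hpq : G.Adj p q) (hpa : (p, a) ∈ k) (hqb : (q, b) ∈ k) (hpqk : (p, q) ∉ k) :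
    G.Adj a b ∧ halfspace G (p, q) = halfspace G (a, b) := by
  have hpa' : G.Adj p a := hk.adj_of_mem hpa
  have hqb' : G.Adj q b := hk.adj_of_mem hqb
  have hqa : q ≠ a := by rintro rfl; exact hpqk hpa
  have hsep := ((hG.mem_hyperplane_iff hk hpa _).mp hqb).2
  have hpq' : ¬ Separates G (p, a) p q :=
    fun hsep => hpqk ((hG.mem_hyperplane_iff hk hpa _).mpr ⟨hpq, hsep⟩)
  have hp := fst_mem_halfspace hpa'
  unfold Separates at hsep hpq'
  have hb : b ∉ halfspace G (p, a) := by tauto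
  have hpb : p ≠ b := by rintro rfl; exact hb hp
  have := hG.dist_eq_or_of_adj hpa' b
  have := hG.dist_eq_two_of_adj_of_adj hpq.symm hqb' hpb
  simp only [halfspace, Set.mem_ofPred_eq, dist_comm (u := b)] at hb
  have hab : G.Adj a b := dist_eq_one_iff_adj.mp (by omega)
  exact ⟨hab, hG.halfspace_eq_of_square hpq hqb' hab.symm hpa'.symm hpb hqa⟩

theorem adjTo_of_adj_of_dist (hG : IsMedianGraph G) (hk : IsHyperplane G k) {p q r : V}
    (hp : AdjTo G k p) (hr : AdjTo G k r) (hpq : G.Adj p q)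
    (hqr : G.dist q r + 1 = G.dist p r) : AdjTo G k q := by
  obtain ⟨a, hpa⟩ := (hG.adjTo_iff_exists_mem hk).mp hp
  have hpa' : G.Adj p a := hk.adj_of_mem hpa
  by_cases haq : a = q
  · subst haq
    exact ⟨(p, a), hpa, .inr rfl⟩
  -- find `x` towards which both `a` and `q` step down from `p`: `r` itself if `a` is closer
  -- to `r` than `p`, and otherwise the far end `c` of an edge of `k` at `r`
  rcases hG.dist_eq_or_of_adj hpa' r with hfar | hnear
  · obtain ⟨c, hrc⟩ := (hG.adjTo_iff_exists_mem hk).mp hr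
    have hrc' : G.Adj r c := hk.adj_of_mem hrc
    have hsep := ((hG.mem_hyperplane_iff hk hpa _).mp hrc).2
    simp only [Separates, halfspace, Set.mem_ofPred_eq, dist_comm (u := r),
      dist_comm (u := c)] at hsep
    have := hG.dist_eq_or_of_adj' hrc' p
    have := hG.dist_eq_or_of_adj' hrc' a
    have := hG.dist_eq_or_of_adj hpa' c
    have := hG.dist_eq_or_of_adj hpq c
    have : G.dist q c ≤ G.dist q r + G.dist r c := hG.1.dist_triangle
    rw [dist_eq_one_iff_adj.mpr hrc'] at this
    exact hG.adjTo_of_dist_add_one hk hpa hpq haq (x := c) (by omega) (by omega)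
  · exact hG.adjTo_of_dist_add_one hk hpa hpq haq hnear.symm hqr

theorem isGeodesicallyConvex_carrier (hG : IsMedianGraph G) (hk : IsHyperplane G k) :
    G.IsGeodesicallyConvex {v | AdjTo G k v} :=
  hG.1.isGeodesicallyConvex_of_step fun _ _ _ hp hr hpq hqr =>
    hG.adjTo_of_adj_of_dist hk hp hr hpq hqr

theorem transverse_of_mem_of_adjTo (hG : IsMedianGraph G) (hh : IsHyperplane G h)
    (hk : IsHyperplane G k) (hne : h ≠ k) {p r : V} (hpr : (p, r) ∈ h) (hp : AdjTo G k p)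
    (hr : AdjTo G k r) : Transverse G h k := by
  obtain ⟨a, hpa⟩ := (hG.adjTo_iff_exists_mem hk).mp hp
  obtain ⟨c, hrc⟩ := (hG.adjTo_iff_exists_mem hk).mp hr
  have hpr' : G.Adj p r := hh.adj_of_mem hpr
  obtain ⟨hac, hside⟩ := hG.adj_of_mem_of_mem hk hpr' hpa hrc
    fun hprk => hne (hG.hyperplane_eq_of_mem hh hk hpr hprk)
  exact ⟨p, r, a, c, hpr, hG.mem_of_halfspace_eq hh hpr hac hside.symm, hpa, hrc, hpr', hac,
    hk.adj_of_mem hpa, hk.adj_of_mem hrc⟩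

theorem wv_inter_subset_of_dist (hG : IsMedianGraph G) {v w x : V}
    (hx : G.dist v x + G.dist x w = G.dist v w) : Wv G v ∩ Wv G w ⊆ Wv G x :=
  fun _ ⟨hv, hw⟩ => ⟨hv.1, hG.isGeodesicallyConvex_carrier hv.1 hv.2 hw.2 hx⟩

/-! ### Extremal vertices -/

/-- The cone point is the hyperplane dual to the first edge of a geodesic from `v` to `x`. -/
theorem linkIsCone_of_wv_subset (hG : IsMedianGraph G) {v x : V} (hvx : v ≠ x)
    (hsub : Wv G v ⊆ Wv G x) : LinkIsCone G v := by
  obtain ⟨q, hvq, hq⟩ := hG.1.exists_adj_dist_add_one hvx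
  have hh := isHyperplane_dualHyperplane (e := (v, q)) hvq
  have hvqh := mem_dualHyperplane_self (e := (v, q)) hvq
  refine ⟨_, ⟨hh, _, hvqh, .inl rfl⟩, fun k hk hne => ?_⟩
  have hqk : AdjTo G k q := hG.wv_inter_subset_of_dist
    (by rw [dist_eq_one_iff_adj.mpr hvq]; omega) ⟨hk, hsub hk⟩ |>.2
  exact hG.transverse_of_mem_of_adjTo hh hk.1 (Ne.symm hne) hvqh hk.2 hqk

theorem eq_of_wv_subset (hG : IsMedianGraph G) (hext : ∀ v : V, ¬ LinkIsCone G v) {v x : V}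
    (hsub : Wv G v ⊆ Wv G x) : v = x := by
  by_contra hvx
  exact hext v (hG.linkIsCone_of_wv_subset hvx hsub)

theorem iso_ext_of_hmap (hG : IsMedianGraph G) (hext : ∀ v : V, ¬ LinkIsCone G v)
    {φ ψ : G ≃g G} (hφψ : ∀ h, IsHyperplane G h → hmap G φ h = hmap G ψ h) : φ = ψ :=
  RelIso.ext fun v => hG.eq_of_wv_subset hext <| (show Wv G (φ v) = Wv G (ψ v) by
    rw [hG.1.wv_apply φ, hG.1.wv_apply ψ, Set.image_congr fun k hk => hφψ k hk.1]).subset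

/-- The cone point is the hyperplane dual to `vz`. -/
theorem hypLinkCone_of_forall_adjTo (hG : IsMedianGraph G) {v w z : V} (hvw : G.Adj v w)
    (hvz : G.Adj v z) (hz : (v, z) ∉ dualHyperplane G (v, w))
    (hmid : ∀ u ∈ Wv G v ∩ Wv G w, AdjTo G u z) :
    HypLinkCone G (dualHyperplane G (v, w)) (v, w) := by
  have hh := isHyperplane_dualHyperplane (e := (v, w)) hvw
  have hvwh := mem_dualHyperplane_self (e := (v, w)) hvw
  obtain ⟨y, hzy⟩ := (hG.adjTo_iff_exists_mem hh).mp
    (hmid _ ⟨⟨hh, _, hvwh, .inl rfl⟩, ⟨hh, _, hvwh, .inr rfl⟩⟩)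
  obtain ⟨hwy, hside⟩ := hG.adj_of_mem_of_mem hh hvz hvwh hzy hz
  have hk := isHyperplane_dualHyperplane (e := (v, z)) hvz
  have hvzk := mem_dualHyperplane_self (e := (v, z)) hvz
  refine ⟨_, hk, fun hkh => hz (hkh ▸ hvzk),
    ⟨z, y, hvzk, hG.mem_of_halfspace_eq hk hvzk hwy hside.symm, hh.adj_of_mem hzy⟩, ?_⟩
  rintro u hu - ⟨c, d, hvc, hwd, -⟩ huk
  exact hG.transverse_of_mem_of_adjTo hk hu (Ne.symm huk) hvzk ⟨_, hvc, .inl rfl⟩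
    (hmid u ⟨⟨hu, _, hvc, .inl rfl⟩, ⟨hu, _, hwd, .inl rfl⟩⟩)

theorem eq_of_wv_inter_subset_of_dist (hG : IsMedianGraph G) (hnoext : NoHypExtremalVertex G)
    {v w x : V} (hvw : G.Adj v w) (hsub : Wv G v ∩ Wv G w ⊆ Wv G x)
    (hwx : G.dist w x = G.dist v x + 1) : x = v := by
  -- otherwise the first edge `vz` of a geodesic from `v` to `x` makes `vw` extremal
  by_contra hxv
  obtain ⟨z, hvz, hz⟩ := hG.1.exists_adj_dist_add_one (Ne.symm hxv)
  have hmid : ∀ u ∈ Wv G v ∩ Wv G w, AdjTo G u z := fun u hu =>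
    (hG.wv_inter_subset_of_dist (by rw [dist_eq_one_iff_adj.mpr hvz]; omega)
      ⟨hu.1, hsub hu⟩).2
  have hz' : (v, z) ∉ dualHyperplane G (v, w) := fun ⟨_, hθ⟩ => by
    have hsep := (hG.theta_iff_separates (e := (v, w)) hvw).mp hθ
    simp only [Separates, halfspace, Set.mem_ofPred_eq, dist_self,
      dist_eq_one_iff_adj.mpr hvw, dist_eq_one_iff_adj.mpr hvz.symm] at hsep
    have : G.dist w x ≤ G.dist w z + G.dist z x := hG.1.dist_triangle
    rw [dist_comm (u := w) (v := z)] at this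
    omega
  exact hnoext _ (isHyperplane_dualHyperplane hvw) _ (mem_dualHyperplane_self hvw)
    (hG.hypLinkCone_of_forall_adjTo hvw hvz hz' hmid)

theorem adj_iff_wv (hG : IsMedianGraph G) (hnoext : NoHypExtremalVertex G) {v w : V} :
    G.Adj v w ↔ v ≠ w ∧ ∀ x, Wv G v ∩ Wv G w ⊆ Wv G x → x = v ∨ x = w := by
  refine ⟨fun hvw => ⟨hvw.ne, fun x hsub => ?_⟩, fun ⟨hvw, h⟩ => ?_⟩
  · rcases hG.dist_eq_or_of_adj hvw x with hx | hx
    · exact .inl (hG.eq_of_wv_inter_subset_of_dist hnoext hvw hsub hx)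
    · exact .inr (hG.eq_of_wv_inter_subset_of_dist hnoext hvw.symm
        (Set.inter_comm (Wv G w) _ ▸ hsub) hx)
  · obtain ⟨x, hvx, hx⟩ := hG.1.exists_adj_dist_add_one hvw
    rcases h x (hG.wv_inter_subset_of_dist (by rw [dist_eq_one_iff_adj.mpr hvx]; omega))
      with rfl | rfl
    · exact absurd rfl hvx.ne
    · exact hvx

theorem hyperplane_eq_of_forall_adjTo_iff (hG : IsMedianGraph G)
    (hnoext : NoHypExtremalVertex G) {u₁ u₂ : Set (V × V)} (h₁ : IsHyperplane G u₁)
    (h₂ : IsHyperplane G u₂) (hcar : ∀ t, AdjTo G u₁ t ↔ AdjTo G u₂ t) :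
    u₁ = u₂ := by
  by_contra hne
  obtain ⟨⟨p, q⟩, hpq₁⟩ := h₁.nonempty
  have hpq : G.Adj p q := h₁.adj_of_mem hpq₁
  have hp₂ := (hcar p).mp ⟨_, hpq₁, .inl rfl⟩
  obtain ⟨a, hpa⟩ := (hG.adjTo_iff_exists_mem h₂).mp hp₂
  obtain ⟨b, hqb⟩ := (hG.adjTo_iff_exists_mem h₂).mp ((hcar q).mp ⟨_, hpq₁, .inr rfl⟩)
  have hab := (hG.adj_of_mem_of_mem h₂ hpq hpa hqb
    fun hpq₂ => hne (hG.hyperplane_eq_of_mem h₁ h₂ hpq₁ hpq₂)).1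
  refine hnoext u₁ h₁ (p, q) hpq₁ ⟨u₂, h₂, Ne.symm hne, ⟨a, b, hpa, hqb, hab⟩, ?_⟩
  rintro u hu hu₁ ⟨c, d, hpc, hqd, -⟩ hu₂
  obtain ⟨hcd, hside⟩ := hG.adj_of_mem_of_mem hu hpq hpc hqd
    fun hpqu => hu₁ (hG.hyperplane_eq_of_mem hu h₁ hpqu hpq₁)
  have hc₂ := (hcar c).mp ⟨_, hG.mem_of_halfspace_eq h₁ hpq₁ hcd hside.symm, .inl rfl⟩
  exact (hG.transverse_of_mem_of_adjTo hu h₂ hu₂ hpc hp₂ hc₂).symm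

/-! ### Cliques of the contact graph -/

theorem inter_nonempty_of_pairwise (hG : IsMedianGraph G) {S T U : Set V}
    (hS : G.IsGeodesicallyConvex S) (hT : G.IsGeodesicallyConvex T)
    (hU : G.IsGeodesicallyConvex U) (hST : (S ∩ T).Nonempty) (hSU : (S ∩ U).Nonempty)
    (hTU : (T ∩ U).Nonempty) : (S ∩ T ∩ U).Nonempty := by
  obtain ⟨a, haS, haT⟩ := hST
  obtain ⟨b, hbS, hbU⟩ := hSU
  obtain ⟨c, hcT, hcU⟩ := hTU
  obtain ⟨m, ⟨hab, hac, hbc⟩, -⟩ := hG.2 a b c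
  exact ⟨m, ⟨hS haS hbS hab, hT haT hcT hac⟩, hU hbU hcU hbc⟩

/-- Helly property. -/
theorem exists_mem_of_pairwise_inter_nonempty (hG : IsMedianGraph G) {ι : Type*}
    (s : Finset ι) (hs : s.Nonempty) (S : ι → Set V)
    (hconv : ∀ i ∈ s, G.IsGeodesicallyConvex (S i))
    (hpair : ∀ i ∈ s, ∀ j ∈ s, (S i ∩ S j).Nonempty) : ∃ x, ∀ i ∈ s, x ∈ S i := by
  classical
  induction s using Finset.induction_on generalizing S with
  | empty => exact absurd hs Finset.not_nonempty_empty
  | @insert a s has ih =>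
    rcases s.eq_empty_or_nonempty with rfl | hs'
    · obtain ⟨x, hx, -⟩ := hpair a (by simp) a (by simp)
      exact ⟨x, by simpa using hx⟩
    have hpair' : ∀ i ∈ s, ∀ j ∈ s, (S i ∩ S a ∩ (S j ∩ S a)).Nonempty := by
      intro i hi j hj
      obtain ⟨m, ⟨hmi, hmj⟩, hma⟩ := hG.inter_nonempty_of_pairwise
        (hconv i (by simp [hi])) (hconv j (by simp [hj])) (hconv a (by simp))
        (hpair i (by simp [hi]) j (by simp [hj])) (hpair i (by simp [hi]) a (by simp))
        (hpair j (by simp [hj]) a (by simp))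
      exact ⟨m, ⟨hmi, hma⟩, hmj, hma⟩
    obtain ⟨x, hx⟩ := ih hs' (fun i => S i ∩ S a)
      (fun i hi => (hconv i (by simp [hi])).inter (hconv a (by simp))) hpair'
    refine ⟨x, fun i hi => ?_⟩
    rcases Finset.mem_insert.mp hi with rfl | hi
    · obtain ⟨j, hj⟩ := hs'
      exact (hx j hj).2
    · exact (hx i hi).1

theorem exists_subset_hypsAt_of_finite (hG : IsMedianGraph G) [Nonempty V] {C : Set (Hyp G)}
    (hC : (contactGraph G).IsClique C) (hfin : C.Finite) : ∃ x, C ⊆ hypsAt G x := by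
  rcases C.eq_empty_or_nonempty with rfl | hne
  · exact ⟨Classical.arbitrary V, Set.empty_subset _⟩
  have hpair : ∀ h ∈ hfin.toFinset, ∀ h' ∈ hfin.toFinset,
      ({v | AdjTo G h.1 v} ∩ {v | AdjTo G h'.1 v}).Nonempty := fun h hh h' hh' => by
    by_cases heq : h = h'
    · subst heq
      obtain ⟨e, he⟩ := h.2.nonempty
      exact ⟨e.1, ⟨e, he, .inl rfl⟩, ⟨e, he, .inl rfl⟩⟩
    · obtain ⟨-, t, ht, ht'⟩ := hC (by simpa using hh) (by simpa using hh') heq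
      exact ⟨t, ht, ht'⟩
  obtain ⟨x, hx⟩ := hG.exists_mem_of_pairwise_inter_nonempty hfin.toFinset (by simpa using hne)
    (fun h => {v | AdjTo G h.1 v}) (fun h _ => hG.isGeodesicallyConvex_carrier h.2) hpair
  exact ⟨x, fun h hh => ⟨h.2, hx h (by simpa using hh)⟩⟩

theorem wv_subset_image (hG : IsMedianGraph G) (v : V) :
    Wv G v ⊆ (fun w => dualHyperplane G (v, w)) '' G.neighborSet v := by
  rintro k ⟨hk, hv⟩
  obtain ⟨a, hva⟩ := (hG.adjTo_iff_exists_mem hk).mp hv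
  have hva' : G.Adj v a := hk.adj_of_mem hva
  exact ⟨a, hva', hG.hyperplane_eq_of_mem (isHyperplane_dualHyperplane hva') hk
    (mem_dualHyperplane_self hva') hva⟩

theorem ncard_le_of_subset_hypsAt (hG : IsMedianGraph G) {N : ℕ}
    (hN : ∀ v : V, (G.neighborSet v).Finite ∧ (G.neighborSet v).ncard ≤ N) {F : Set (Hyp G)}
    {x : V} (hF : F ⊆ hypsAt G x) : F.ncard ≤ N := by
  have hsub : Subtype.val '' F ⊆ (fun w => dualHyperplane G (x, w)) '' G.neighborSet x :=
    (Set.image_subset_iff.mpr hF).trans (hG.wv_subset_image x)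
  calc F.ncard = (Subtype.val '' F).ncard :=
        (Set.ncard_image_of_injective F Subtype.val_injective).symm
    _ ≤ _ := Set.ncard_le_ncard hsub ((hN x).1.image _)
    _ ≤ (G.neighborSet x).ncard := Set.ncard_image_le (hN x).1
    _ ≤ N := (hN x).2

theorem finite_of_isClique (hG : IsMedianGraph G) (hULF : UnifLocFinite G) [Nonempty V]
    {C : Set (Hyp G)} (hC : (contactGraph G).IsClique C) : C.Finite := by
  obtain ⟨N, hN⟩ := hULF
  by_contra hinf
  obtain ⟨F, hFC, hFfin, hFcard⟩ := Set.Infinite.exists_subset_ncard_eq hinf (N + 1)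
  obtain ⟨x, hx⟩ := hG.exists_subset_hypsAt_of_finite (hC.subset hFC) hFfin
  have := hG.ncard_le_of_subset_hypsAt hN hx
  omega

theorem eq_of_hypsAt_subset (hG : IsMedianGraph G) (hext : ∀ v : V, ¬ LinkIsCone G v)
    {v x : V} (hvx : hypsAt G v ⊆ hypsAt G x) : v = x :=
  hG.eq_of_wv_subset hext fun k hk => hvx (a := ⟨k, hk.1⟩) hk

theorem exists_image_hypsAt_eq (hG : IsMedianGraph G) (hULF : UnifLocFinite G)
    (hext : ∀ v : V, ¬ LinkIsCone G v) (ψ : contactGraph G ≃g contactGraph G) (v : V) :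
    ∃ x, ψ '' hypsAt G v = hypsAt G x := by
  have : Nonempty V := ⟨v⟩
  have hsub : ∀ {C : Set (Hyp G)}, (contactGraph G).IsClique C → ∃ x, C ⊆ hypsAt G x :=
    fun hC => hG.exists_subset_hypsAt_of_finite hC (hG.finite_of_isClique hULF hC)
  obtain ⟨x, hx⟩ := hsub ((isClique_hypsAt v).image_iso ψ)
  obtain ⟨y, hy⟩ := hsub ((isClique_hypsAt x).image_iso ψ.symm)
  obtain rfl : v = y :=
    hG.eq_of_hypsAt_subset hext fun h hh => hy ⟨ψ h, hx ⟨h, hh, rfl⟩, by simp⟩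
  exact ⟨x, hx.antisymm fun h hh => ⟨ψ.symm h, hy ⟨h, hh, rfl⟩, by simp⟩⟩

theorem exists_inducesPerm (hG : IsMedianGraph G) (hULF : UnifLocFinite G)
    (hext : ∀ v : V, ¬ LinkIsCone G v) (ψ : contactGraph G ≃g contactGraph G) :
    ∃ π : Equiv.Perm V, InducesPerm G ψ π := by
  choose f hf using hG.exists_image_hypsAt_eq hULF hext ψ
  have hinj : Function.Injective (hypsAt G) := fun v x hvx =>
    hG.eq_of_hypsAt_subset hext hvx.subset
  have hbij : Function.Bijective f := by
    refine ⟨fun v w hvw => hinj (Set.image_injective.mpr ψ.injective ?_), fun x => ?_⟩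
    · rw [hf, hf, hvw]
    · obtain ⟨y, hy⟩ := hG.exists_image_hypsAt_eq hULF hext ψ.symm x
      refine ⟨y, hinj ?_⟩
      rw [← hf, ← hy, Set.image_image]
      simp
  refine ⟨Equiv.ofBijective f hbij, fun v h => ?_⟩
  change h ∈ hypsAt G v ↔ ψ h ∈ hypsAt G (f v)
  rw [← hf, ψ.injective.mem_set_image]

theorem adj_perm_iff (hG : IsMedianGraph G) (hnoext : NoHypExtremalVertex G)
    {ψ : contactGraph G ≃g contactGraph G} {π : Equiv.Perm V} (hind : InducesPerm G ψ π)
    (v w : V) : G.Adj (π v) (π w) ↔ G.Adj v w := by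
  simp only [hG.adj_iff_wv hnoext, ← hypsAt_inter_subset_iff, π.injective.ne_iff]
  rw [← π.forall_congr_right]
  simp only [hind.hypsAt_apply, ← Set.image_inter ψ.injective,
    Set.image_subset_image_iff ψ.injective, π.injective.eq_iff]

theorem exists_iso_of_inducesPerm (hG : IsMedianGraph G) (hnoext : NoHypExtremalVertex G)
    {ψ : contactGraph G ≃g contactGraph G} {π : Equiv.Perm V} (hind : InducesPerm G ψ π) :
    ∃ φ : G ≃g G, (∀ v, φ v = π v) ∧ ∀ h : Hyp G, (ψ h).1 = hmap G φ h.1 := by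
  let φ : G ≃g G := ⟨π, hG.adj_perm_iff hnoext hind _ _⟩
  refine ⟨φ, fun _ => rfl, fun h => hG.hyperplane_eq_of_forall_adjTo_iff hnoext (ψ h).2
    (hG.1.isHyperplane_hmap φ h.2) fun t => ?_⟩
  obtain ⟨s, rfl⟩ := π.surjective t
  rw [show π s = φ s from rfl, adjTo_hmap_iff]
  exact (and_iff_right (ψ h).2).symm.trans ((hind s h).symm.trans (and_iff_right h.2))

end IsMedianGraph

/-- if `X` is uniformly locally finite, has no extremal vertices and no
hyperplane of `X` has extremal vertices, then `ι : Aut(X) → Aut(𝒞(X))` is an isomorphism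
with inverse `ρ` (induced by the action on maximal cliques). -/
theorem iota_isomorphism (G : SimpleGraph V) (hG : IsMedianGraph G)
    (hULF : UnifLocFinite G) (hext : ∀ v : V, ¬ LinkIsCone G v)
    (hnoext : NoHypExtremalVertex G) :
    -- ι is injective
    (∀ φ ψ : G ≃g G, (∀ h, IsHyperplane G h → hmap G φ h = hmap G ψ h) → φ = ψ) ∧
    -- ι is surjective
    (∀ ψ : contactGraph G ≃g contactGraph G,
      ∃ φ : G ≃g G, ∀ h : Hyp G, (ψ h).1 = hmap G φ h.1) ∧
    -- ρ is the inverse of ι: the vertex permutation induced by ψ via maximal cliques is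
    -- a cubical automorphism φ with ι(φ) = ψ
    (∀ (ψ : contactGraph G ≃g contactGraph G) (π : Equiv.Perm V), InducesPerm G ψ π →
      ∃ φ : G ≃g G, (∀ v : V, φ v = π v) ∧ ∀ h : Hyp G, (ψ h).1 = hmap G φ h.1) := by
  refine ⟨fun _ _ => hG.iso_ext_of_hmap hext, fun ψ => ?_,
    fun _ _ => hG.exists_iso_of_inducesPerm hnoext⟩
  obtain ⟨π, hπ⟩ := hG.exists_inducesPerm hULF hext ψ
  obtain ⟨φ, -, hφ⟩ := hG.exists_iso_of_inducesPerm hnoext hπ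
  exact ⟨φ, hφ⟩
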